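/- arXiv:1612.02312 — 4 statements merged into one kernel-verified Lean document; each statement's English description precedes it below -/
import Mathlib

section
/- Suppose (φ,z) ∈ Λ^a(Y,X), i.e. z_t − φ_t X_t − z_{t+1} ∈ Q_t for t = 0,…,T−1 and z_t − φ*_t Y_t ∈ Q_t for t = 0,…,T (with z predictable, z_{T+1} = 0). Then for every t = 0,…,T: on the event {φ*_t > 0}, z_t ∈ φ*_t Z^a_t, and on {φ*_t = 0}, z_t ∈ Q_t, where Z^a_t is defined by the backward recursion Z^a_T := Y_T + Q_T, W^a_t := Z^a_{t+1} ∩ L_t, V^a_t := W^a_t + Q_t, Z^a_t := conv{V^a_t, X_t + Q_t} ∩ (Y_t + Q_t). -/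
/-!
Backward induction on `t`. Since `φ*_t = φ_t + φ*_{t+1}`, dividing
`z_t = φ_t X_t + z_{t+1} + q` (`q ∈ Q_t`) by `φ*_t` exhibits `z_t / φ*_t` as a convex
combination of `z_{t+1} / φ*_{t+1}` and `X_t`, both shifted by `q / φ*_t ∈ Q_t`; the first point
lies in `Z^a_{t+1} ∩ L_t` by induction and predictability. If `φ*_{t+1} = 0`, then
`z_{t+1} ∈ Q_{t+1} ∩ L_t ⊆ Q_t` is absorbed into the `X_t + Q_t` part. The constraint
`z_t − φ*_t Y_t ∈ Q_t` gives `z_t / φ*_t ∈ Y_t + Q_t`, and for `φ*_t = 0` it is the second claim.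
-/

open Pointwise

/-- Auxiliary backward recursion for the seller's construction: `sellerZ T L Q Y X n`
is the set 𝒵ᵃ_{T−n}, i.e. 𝒵ᵃ_T = Y_T + Q_T and, for t = T−(n+1),
𝒵ᵃ_t = conv{(𝒵ᵃ_{t+1} ∩ L_t) + Q_t, X_t + Q_t} ∩ (Y_t + Q_t). -/
def sellerZ {V : Type*} [AddCommGroup V] [Module ℝ V]
    (T : ℕ) (L Q : ℕ → Set V) (Y X : ℕ → V) : ℕ → Set V
  | 0 => {Y T} + Q T
  | n + 1 =>
      (convexHull ℝ
          (((sellerZ T L Q Y X n ∩ L (T - (n + 1))) + Q (T - (n + 1)))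
            ∪ ({X (T - (n + 1))} + Q (T - (n + 1)))))
        ∩ ({Y (T - (n + 1))} + Q (T - (n + 1)))

namespace ConvexCone

variable {V : Type*} [AddCommGroup V] [Module ℝ V] (C : ConvexCone ℝ V)

theorem inv_smul_mem_singleton_add {c : ℝ} (hc : 0 < c) {y z : V} (h : z - c • y ∈ C) :
    c⁻¹ • z ∈ {y} + (C : Set V) :=
  ⟨y, rfl, c⁻¹ • (z - c • y), C.smul_mem (inv_pos.2 hc) h, by
    dsimp only
    rw [smul_sub, smul_smul, inv_mul_cancel₀ hc.ne', one_smul, add_sub_cancel]⟩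

theorem inv_smul_mem_singleton_add_of_mem {a : ℝ} (ha : 0 < a) {x z z' : V}
    (hz : z - a • x - z' ∈ C) (hz' : z' ∈ C) : a⁻¹ • z ∈ {x} + (C : Set V) :=
  C.inv_smul_mem_singleton_add ha (by simpa using C.add_mem hz hz')

theorem inv_smul_mem_convexHull_of_pos {W : Set V} {a b : ℝ} (ha : 0 ≤ a) (hb : 0 < b)
    {x z z' : V} (hz : z - a • x - z' ∈ C) (hz' : b⁻¹ • z' ∈ W) :
    (a + b)⁻¹ • z ∈ convexHull ℝ ((W + (C : Set V)) ∪ ({x} + (C : Set V))) := by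
  have hab : 0 < a + b := by linarith
  -- `q` shifts both endpoints, so the cone need not contain `0`.
  set q := (a + b)⁻¹ • (z - a • x - z')
  have hq : q ∈ C := C.smul_mem (inv_pos.2 hab) hz
  have hw : b⁻¹ • z' + q ∈ W + C := Set.add_mem_add hz' hq
  have hx : x + q ∈ {x} + (C : Set V) := Set.add_mem_add rfl hq
  have hsplit : (a + b)⁻¹ • z = (b / (a + b)) • (b⁻¹ • z' + q) + (a / (a + b)) • (x + q) := by
    simp only [q, smul_add, smul_sub, smul_smul]
    match_scalars <;> field_simp <;> ring
  rw [hsplit]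
  exact convex_convexHull ℝ ((W + (C : Set V)) ∪ ({x} + (C : Set V)))
    (subset_convexHull ℝ _ (Or.inl hw)) (subset_convexHull ℝ _ (Or.inr hx))
    (div_nonneg hb.le hab.le) (div_nonneg ha hab.le)
    (by rw [← add_div, add_comm, div_self hab.ne'])

end ConvexCone

theorem Finset.sum_Icc_eq_add_sum_Icc_add_one {M : Type*} [AddCommMonoid M] (f : ℕ → M)
    {a b : ℕ} (h : a ≤ b) :
    ∑ x ∈ Finset.Icc a b, f x = f a + ∑ x ∈ Finset.Icc (a + 1) b, f x := by
  rw [Finset.Icc_add_one_left_eq_Ioc, add_sum_Ioc_eq_sum_Icc h]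

theorem sellerZ_succ_of_add_eq {V : Type*} [AddCommGroup V] [Module ℝ V]
    {T t n : ℕ} (L Q : ℕ → Set V) (Y X : ℕ → V) (h : t + (n + 1) = T) :
    sellerZ T L Q Y X (n + 1) =
      convexHull ℝ (((sellerZ T L Q Y X n ∩ L t) + Q t) ∪ ({X t} + Q t)) ∩ ({Y t} + Q t) := by
  obtain rfl : t = T - (n + 1) := by omega
  rfl

theorem stmt11_general {V : Type*} [AddCommGroup V] [Module ℝ V] (T : ℕ)
    (L : ℕ → Submodule ℝ V) (Q : ℕ → Set V)
    (hQadd : ∀ t, Q t + Q t = Q t)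
    (hQsmul : ∀ t, ∀ c : ℝ, 0 < c → c • Q t = Q t)
    (hQL : ∀ t, Q (t + 1) ∩ (L t : Set V) ⊆ Q t)
    (Y X : ℕ → V) (φ : ℕ → ℝ)
    (hφ : ∀ t ≤ T, 0 ≤ φ t)
    (z : ℕ → V)
    (hpred : ∀ t ≤ T, z (t + 1) ∈ L t)
    (h1 : ∀ t < T, z t - φ t • X t - z (t + 1) ∈ Q t)
    (h2 : ∀ t ≤ T, z t - (∑ s ∈ Finset.Icc t T, φ s) • Y t ∈ Q t) :
    ∀ t ≤ T,
      (0 < (∑ s ∈ Finset.Icc t T, φ s) →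
          z t ∈ (∑ s ∈ Finset.Icc t T, φ s) •
            sellerZ T (fun u => (L u : Set V)) Q Y X (T - t)) ∧
        ((∑ s ∈ Finset.Icc t T, φ s) = 0 → z t ∈ Q t) := by
  let C : ℕ → ConvexCone ℝ V := fun t =>
    { carrier := Q t
      smul_mem' := fun c hc _ hx => hQsmul t c hc ▸ Set.smul_mem_smul_set hx
      add_mem' := fun _ hx _ hy => hQadd t ▸ Set.add_mem_add hx hy }
  have key : ∀ n t, t + n = T → 0 < ∑ s ∈ Finset.Icc t T, φ s →
      (∑ s ∈ Finset.Icc t T, φ s)⁻¹ • z t ∈ sellerZ T (fun u => (L u : Set V)) Q Y X n := by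
    intro n
    induction n with
    | zero =>
      intro t ht hpos
      obtain rfl : t = T := ht
      exact (C t).inv_smul_mem_singleton_add hpos (h2 t le_rfl)
    | succ n ih =>
      intro t htn hpos
      have ht : t < T := by omega
      rw [sellerZ_succ_of_add_eq _ _ _ _ htn]
      refine ⟨?_, (C t).inv_smul_mem_singleton_add hpos (h2 t ht.le)⟩
      rw [Finset.sum_Icc_eq_add_sum_Icc_add_one φ ht.le] at hpos ⊢
      rcases (Finset.sum_nonneg fun s hs => hφ s (Finset.mem_Icc.mp hs).2 :
          0 ≤ ∑ s ∈ Finset.Icc (t + 1) T, φ s).eq_or_lt with h0 | hpos'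
      · have hz' : z (t + 1) ∈ Q t := hQL t ⟨by simpa [← h0] using h2 (t + 1) ht, hpred t ht.le⟩
        rw [← h0, add_zero] at hpos ⊢
        exact subset_convexHull ℝ _
          (Or.inr ((C t).inv_smul_mem_singleton_add_of_mem hpos (h1 t ht) hz'))
      · exact (C t).inv_smul_mem_convexHull_of_pos (hφ t ht.le) hpos' (h1 t ht)
          ⟨ih (t + 1) (by omega) hpos', (L t).smul_mem _ (hpred t ht.le)⟩
  intro t ht
  refine ⟨fun hpos => ?_, fun h0 => by simpa [h0] using h2 t ht⟩
  rw [Set.mem_smul_set_iff_inv_smul_mem₀ hpos.ne']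
  exact key (T - t) t (by omega) hpos

/-- If (φ,z) ∈ Λᵃ(Y,X), i.e. z_t − φ_t X_t − z_{t+1} ∈ Q_t for t < T and
z_t − φ*_t Y_t ∈ Q_t for t ≤ T, with z predictable and z_{T+1} = 0, then for
every t ≤ T: z_t ∈ φ*_t 𝒵ᵃ_t when φ*_t > 0, and z_t ∈ Q_t when φ*_t = 0. -/
theorem stmt11 {V : Type*} [AddCommGroup V] [Module ℝ V] (T : ℕ)
    (L : ℕ → Submodule ℝ V) (Q : ℕ → Set V)
    (hQconv : ∀ t, Convex ℝ (Q t))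
    (hQ0 : ∀ t, (0 : V) ∈ Q t)
    (hQadd : ∀ t, Q t + Q t = Q t)
    (hQsmul : ∀ t, ∀ c : ℝ, 0 < c → c • Q t = Q t)
    (hQL : ∀ t, Q (t + 1) ∩ (L t : Set V) ⊆ Q t)
    (Y X : ℕ → V) (φ : ℕ → ℝ)
    (hφ : ∀ t ≤ T, 0 ≤ φ t)
    (hφsum : ∑ t ∈ Finset.range (T + 1), φ t = 1)
    (z : ℕ → V) (hzT : z (T + 1) = 0)
    (hpred : ∀ t ≤ T, z (t + 1) ∈ L t)
    (h1 : ∀ t < T, z t - φ t • X t - z (t + 1) ∈ Q t)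
    (h2 : ∀ t ≤ T, z t - (∑ s ∈ Finset.Icc t T, φ s) • Y t ∈ Q t) :
    ∀ t ≤ T,
      (0 < (∑ s ∈ Finset.Icc t T, φ s) →
          z t ∈ (∑ s ∈ Finset.Icc t T, φ s) •
            sellerZ T (fun u => (L u : Set V)) Q Y X (T - t)) ∧
        ((∑ s ∈ Finset.Icc t T, φ s) = 0 → z t ∈ Q t) :=
  stmt11_general T L Q hQadd hQsmul hQL Y X φ hφ z hpred h1 h2
end

section
/- If a ∈ Z^a_0 (from the seller's backward construction), then there exist a mixed stopping time φ and a predictable process z with z_0 = a, z_{T+1} = 0 such that z_t − φ_t X_t − z_{t+1} ∈ Q_t for all t = 0,…,T−1 and z_t − φ*_t Y_t ∈ Q_t for all t = 0,…,T. Combined with the reverse inclusion, Z^a_0 = {z_0 : (φ,z) ∈ Λ^a(Y,X)}. -/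
open Pointwise

open Finset

/-!
The proof runs through hedges started at `t`: pairs `(φ, z)` satisfying the constraints of
`Λᵃ(Y,X)` from time `t` on, except the covering constraint `z_t - φ*_t Y_t ∈ Q_t` at `t` itself.
As the `Q_s` are convex cones, hedges are closed under sums and nonnegative multiples, so the set
`B_t` (`sellerHedgeValues`) of initial values of hedges of total mass `1` is convex, and
`Z^a_t = B_t ∩ Y^a_t` by backward induction from `B_T = V`. For `t < T`, every point of `V^a_t` or of `X^a_t` starts a
hedge (continue, resp. stop at `t`), so `conv{V^a_t, X^a_t} ⊆ B_t`. Conversely, let `α` be the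
mass a hedge puts after `t`. If `α = 0`, then `z_{t+1} ∈ Q_{t+1} ∩ L_t ⊆ Q_t` puts `z_t` in
`X^a_t`; otherwise `z_t = α • (w + α⁻¹ • q) + φ_t • X_t`, where `q ∈ Q_t` is the slack at `t` and
`w = α⁻¹ • z_{t+1}`, the start of the rescaled remaining hedge, lies in `Z^a_{t+1} ∩ L_t`.
-/

lemma mem_singleton_add_iff_sub_mem {G : Type*} [AddCommGroup G] {a v : G} {s : Set G} :
    v ∈ {a} + s ↔ v - a ∈ s := by
  rw [Set.singleton_add]
  constructor
  · rintro ⟨q, hq, rfl⟩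
    simpa using hq
  · intro h
    exact ⟨v - a, h, add_sub_cancel a v⟩

lemma sum_Icc_eq_sum_range_of_eq_zero {M : Type*} [AddCommMonoid M] {f : ℕ → M} {t T : ℕ}
    (h : ∀ s < t, f s = 0) : ∑ s ∈ Icc t T, f s = ∑ s ∈ range (T + 1), f s := by
  apply sum_subset
  · intro s hs
    simp only [mem_Icc, mem_range] at hs ⊢
    omega
  · intro s hsT hs
    simp only [mem_Icc, mem_range] at hs hsT
    exact h s (by omega)

section SellerHedge

variable {V : Type*} [AddCommGroup V] [Module ℝ V]

structure IsSellerHedge (T : ℕ) (L : ℕ → Submodule ℝ V) (Q : ℕ → Set V) (Y X : ℕ → V)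
    (t : ℕ) (φ : ℕ → ℝ) (z : ℕ → V) : Prop where
  nonneg : ∀ s ≤ T, 0 ≤ φ s
  eq_zero_of_lt : ∀ s < t, φ s = 0
  terminal : z (T + 1) = 0
  mem_L : ∀ s, t ≤ s → s ≤ T → z (s + 1) ∈ L s
  exercise_mem : ∀ s, t ≤ s → s < T → z s - φ s • X s - z (s + 1) ∈ Q s
  cover_mem : ∀ s, t < s → s ≤ T → z s - (∑ u ∈ Icc s T, φ u) • Y s ∈ Q s

def sellerHedgeValues (T : ℕ) (L : ℕ → Submodule ℝ V) (Q : ℕ → Set V) (Y X : ℕ → V)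
    (t : ℕ) : Set V :=
  {v | ∃ φ z, IsSellerHedge T L Q Y X t φ z ∧ ∑ s ∈ range (T + 1), φ s = 1 ∧ z t = v}

variable {T : ℕ} {L : ℕ → Submodule ℝ V} {Q : ℕ → Set V} {Y X : ℕ → V} {t : ℕ}

namespace IsSellerHedge

variable {φ ψ : ℕ → ℝ} {z w : ℕ → V}

lemma add (hadd : ∀ s, ∀ x ∈ Q s, ∀ y ∈ Q s, x + y ∈ Q s)
    (h : IsSellerHedge T L Q Y X t φ z) (h' : IsSellerHedge T L Q Y X t ψ w) :
    IsSellerHedge T L Q Y X t (φ + ψ) (z + w) where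
  nonneg s hs := add_nonneg (h.nonneg s hs) (h'.nonneg s hs)
  eq_zero_of_lt s hs := by simp [h.eq_zero_of_lt s hs, h'.eq_zero_of_lt s hs]
  terminal := by simp [h.terminal, h'.terminal]
  mem_L s hts hsT := (L s).add_mem (h.mem_L s hts hsT) (h'.mem_L s hts hsT)
  exercise_mem s hts hsT := by
    convert hadd s _ (h.exercise_mem s hts hsT) _ (h'.exercise_mem s hts hsT) using 1
    simp only [Pi.add_apply]
    module
  cover_mem s hts hsT := by
    convert hadd s _ (h.cover_mem s hts hsT) _ (h'.cover_mem s hts hsT) using 1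
    simp only [Pi.add_apply, sum_add_distrib]
    module

lemma smul (hsmul : ∀ s, ∀ c : ℝ, 0 ≤ c → ∀ x ∈ Q s, c • x ∈ Q s) {c : ℝ} (hc : 0 ≤ c)
    (h : IsSellerHedge T L Q Y X t φ z) : IsSellerHedge T L Q Y X t (c • φ) (c • z) where
  nonneg s hs := mul_nonneg hc (h.nonneg s hs)
  eq_zero_of_lt s hs := by simp [h.eq_zero_of_lt s hs]
  terminal := by simp [h.terminal]
  mem_L s hts hsT := (L s).smul_mem c (h.mem_L s hts hsT)
  exercise_mem s hts hsT := by
    convert hsmul s c hc _ (h.exercise_mem s hts hsT) using 1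
    simp only [Pi.smul_apply, smul_eq_mul]
    module
  cover_mem s hts hsT := by
    convert hsmul s c hc _ (h.cover_mem s hts hsT) using 1
    simp only [Pi.smul_apply, smul_eq_mul, ← mul_sum]
    module

lemma tail (h : IsSellerHedge T L Q Y X t φ z) :
    IsSellerHedge T L Q Y X (t + 1) (fun s => if t < s then φ s else 0) z where
  nonneg s hs := by
    split_ifs
    exacts [h.nonneg s hs, le_rfl]
  eq_zero_of_lt s hs := if_neg (by omega)
  terminal := h.terminal
  mem_L s hts hsT := h.mem_L s (by omega) hsT
  exercise_mem s hts hsT := by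
    rw [if_pos (by omega)]
    exact h.exercise_mem s (by omega) hsT
  cover_mem s hts hsT := by
    rw [sum_congr rfl fun u hu => if_pos (by simp only [mem_Icc] at hu; omega)]
    exact h.cover_mem s (by omega) hsT

lemma cons (h : IsSellerHedge T L Q Y X (t + 1) φ z) (ht : t ≤ T) (hL : z (t + 1) ∈ L t)
    (hY : z (t + 1) - (∑ u ∈ Icc (t + 1) T, φ u) • Y (t + 1) ∈ Q (t + 1)) {q : V}
    (hq : q ∈ Q t) : IsSellerHedge T L Q Y X t φ (Function.update z t (z (t + 1) + q)) where
  nonneg := h.nonneg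
  eq_zero_of_lt s hs := h.eq_zero_of_lt s (by omega)
  terminal := by rw [Function.update_of_ne (by omega), h.terminal]
  mem_L s hts hsT := by
    rw [Function.update_of_ne (by omega)]
    rcases hts.eq_or_lt with rfl | hts
    exacts [hL, h.mem_L s hts hsT]
  exercise_mem s hts hsT := by
    rw [Function.update_of_ne (a := s + 1) (by omega)]
    rcases hts.eq_or_lt with rfl | hts
    · rwa [h.eq_zero_of_lt _ (lt_add_one _), zero_smul, sub_zero, Function.update_self,
        add_sub_cancel_left]
    · rw [Function.update_of_ne (by omega)]
      exact h.exercise_mem s hts hsT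
  cover_mem s hts hsT := by
    rw [Function.update_of_ne (by omega)]
    rcases (Nat.succ_le_of_lt hts).eq_or_lt with rfl | hts
    exacts [hY, h.cover_mem s hts hsT]

lemma single (hQ0 : ∀ s, (0 : V) ∈ Q s) (ht : t ≤ T) {v : V} (hv : t < T → v - X t ∈ Q t) :
    IsSellerHedge T L Q Y X t (Pi.single t 1) (Pi.single t v) where
  nonneg s _ := by
    rcases eq_or_ne s t with rfl | hst
    · simp
    · simp [hst]
  eq_zero_of_lt s hs := Pi.single_eq_of_ne (by omega) _
  terminal := Pi.single_eq_of_ne (by omega) _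
  mem_L s hts _ := by
    rw [Pi.single_eq_of_ne (by omega)]
    exact (L s).zero_mem
  exercise_mem s hts hsT := by
    rcases hts.eq_or_lt with rfl | hts
    · simpa using hv hsT
    · simpa [Pi.single_eq_of_ne hts.ne', Pi.single_eq_of_ne (by omega : s + 1 ≠ t)] using hQ0 s
  cover_mem s hts _ := by
    simpa [Pi.single_eq_of_ne hts.ne', sum_pi_single', hts.not_ge] using hQ0 s

end IsSellerHedge

lemma convex_sellerHedgeValues (hadd : ∀ s, ∀ x ∈ Q s, ∀ y ∈ Q s, x + y ∈ Q s)
    (hsmul : ∀ s, ∀ c : ℝ, 0 ≤ c → ∀ x ∈ Q s, c • x ∈ Q s) (t : ℕ) :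
    Convex ℝ (sellerHedgeValues T L Q Y X t) := by
  rintro _ ⟨φ, z, h, hφ, rfl⟩ _ ⟨ψ, w, h', hψ, rfl⟩ a b ha hb hab
  refine ⟨a • φ + b • ψ, a • z + b • w, (h.smul hsmul ha).add hadd (h'.smul hsmul hb), ?_, rfl⟩
  simp [sum_add_distrib, ← mul_sum, hφ, hψ, hab]

lemma sellerHedgeValues_self (hQ0 : ∀ s, (0 : V) ∈ Q s) :
    sellerHedgeValues T L Q Y X T = Set.univ :=
  Set.eq_univ_of_forall fun v =>
    ⟨Pi.single T 1, Pi.single T v, .single hQ0 le_rfl fun h => absurd h (lt_irrefl T),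
      by simp [sum_pi_single'], by simp⟩

lemma convexHull_subset_sellerHedgeValues (hadd : ∀ s, ∀ x ∈ Q s, ∀ y ∈ Q s, x + y ∈ Q s)
    (hsmul : ∀ s, ∀ c : ℝ, 0 ≤ c → ∀ x ∈ Q s, c • x ∈ Q s) (hQ0 : ∀ s, (0 : V) ∈ Q s)
    (ht : t < T) :
    convexHull ℝ
        ((sellerHedgeValues T L Q Y X (t + 1) ∩ ({Y (t + 1)} + Q (t + 1)) ∩ L t + Q t)
          ∪ ({X t} + Q t))
      ⊆ sellerHedgeValues T L Q Y X t := by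
  refine convexHull_min (Set.union_subset ?_ ?_) (convex_sellerHedgeValues hadd hsmul t)
  · rintro _ ⟨_, ⟨⟨⟨φ, z, h, hφ, rfl⟩, hY⟩, hL⟩, q, hq, rfl⟩
    rw [mem_singleton_add_iff_sub_mem] at hY
    refine ⟨φ, _, h.cons ht.le hL ?_ hq, hφ, Function.update_self _ _ _⟩
    rwa [sum_Icc_eq_sum_range_of_eq_zero h.eq_zero_of_lt, hφ, one_smul]
  · rintro _ ⟨_, rfl, q, hq, rfl⟩
    refine ⟨_, _, .single hQ0 ht.le fun _ => by simpa using hq, ?_, Pi.single_eq_same _ _⟩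
    simp [sum_pi_single', ht.le]

lemma inv_smul_mem_sellerHedgeValues_succ
    (hsmul : ∀ s, ∀ c : ℝ, 0 ≤ c → ∀ x ∈ Q s, c • x ∈ Q s) {φ : ℕ → ℝ} {z : ℕ → V}
    (h : IsSellerHedge T L Q Y X t φ z) (ht : t < T) (hα : 0 < ∑ u ∈ Icc (t + 1) T, φ u) :
    (∑ u ∈ Icc (t + 1) T, φ u)⁻¹ • z (t + 1)
      ∈ sellerHedgeValues T L Q Y X (t + 1) ∩ ({Y (t + 1)} + Q (t + 1)) := by
  set α := ∑ u ∈ Icc (t + 1) T, φ u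
  have h' := h.tail.smul hsmul (inv_nonneg.2 hα.le)
  refine ⟨⟨_, _, h', ?_, rfl⟩, ?_⟩
  · rw [← sum_Icc_eq_sum_range_of_eq_zero h'.eq_zero_of_lt]
    simp only [Pi.smul_apply, smul_eq_mul, ← mul_sum]
    rw [sum_congr rfl fun u hu => if_pos (by simp only [mem_Icc] at hu; omega),
      inv_mul_cancel₀ hα.ne']
  · rw [mem_singleton_add_iff_sub_mem]
    convert hsmul (t + 1) α⁻¹ (inv_nonneg.2 hα.le) _ (h.cover_mem (t + 1) (lt_add_one t) ht)
      using 1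
    rw [smul_sub, smul_smul, inv_mul_cancel₀ hα.ne', one_smul]

lemma sellerHedgeValues_subset_convexHull (hadd : ∀ s, ∀ x ∈ Q s, ∀ y ∈ Q s, x + y ∈ Q s)
    (hsmul : ∀ s, ∀ c : ℝ, 0 ≤ c → ∀ x ∈ Q s, c • x ∈ Q s) (hQ0 : ∀ s, (0 : V) ∈ Q s)
    (hQL : ∀ s, Q (s + 1) ∩ (L s : Set V) ⊆ Q s) (ht : t < T) :
    sellerHedgeValues T L Q Y X t ⊆
      convexHull ℝ
        ((sellerHedgeValues T L Q Y X (t + 1) ∩ ({Y (t + 1)} + Q (t + 1)) ∩ L t + Q t)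
          ∪ ({X t} + Q t)) := by
  rintro _ ⟨φ, z, h, hφ, rfl⟩
  set α := ∑ u ∈ Icc (t + 1) T, φ u with hα_def
  have hαβ : α + φ t = 1 := by
    rw [hα_def, Finset.Icc_add_one_left_eq_Ioc, sum_Ioc_add_eq_sum_Icc ht.le,
      sum_Icc_eq_sum_range_of_eq_zero h.eq_zero_of_lt, hφ]
  have hα : 0 ≤ α := sum_nonneg fun u hu => h.nonneg u (mem_Icc.1 hu).2
  have hq := h.exercise_mem t le_rfl ht
  have hzL := h.mem_L t le_rfl ht.le
  rcases hα.eq_or_lt with hα0 | hα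
  · have hz : z (t + 1) ∈ Q t := by
      refine hQL t ⟨?_, hzL⟩
      simpa [← hα_def, ← hα0] using h.cover_mem (t + 1) (lt_add_one t) ht
    apply subset_convexHull ℝ _ (Set.mem_union_right _ ?_)
    rw [mem_singleton_add_iff_sub_mem]
    convert hadd t _ hq _ hz using 1
    rw [show φ t = 1 by linarith, one_smul]
    abel
  · have hw := inv_smul_mem_sellerHedgeValues_succ hsmul h ht hα
    have hwL : α⁻¹ • z (t + 1) ∈ (L t : Set V) := (L t).smul_mem α⁻¹ hzL
    have hV := Set.add_mem_add (Set.mem_inter hw hwL) (hsmul t α⁻¹ (inv_nonneg.2 hα.le) _ hq)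
    have hX := Set.add_mem_add (Set.mem_singleton (X t)) (hQ0 t)
    convert convex_convexHull ℝ _ (subset_convexHull ℝ _ (Set.mem_union_left _ hV))
      (subset_convexHull ℝ _ (Set.mem_union_right _ hX)) hα.le (h.nonneg t ht.le) hαβ using 1
    rw [add_zero, smul_add, smul_smul, smul_smul, mul_inv_cancel₀ hα.ne', one_smul, one_smul]
    abel

lemma sellerZ_eq_sellerHedgeValues_inter (hadd : ∀ s, ∀ x ∈ Q s, ∀ y ∈ Q s, x + y ∈ Q s)
    (hsmul : ∀ s, ∀ c : ℝ, 0 ≤ c → ∀ x ∈ Q s, c • x ∈ Q s) (hQ0 : ∀ s, (0 : V) ∈ Q s)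
    (hQL : ∀ s, Q (s + 1) ∩ (L s : Set V) ⊆ Q s) {n : ℕ} (hn : n ≤ T) :
    sellerZ T (fun u => (L u : Set V)) Q Y X n
      = sellerHedgeValues T L Q Y X (T - n) ∩ ({Y (T - n)} + Q (T - n)) := by
  induction n with
  | zero => rw [sellerZ, Nat.sub_zero, sellerHedgeValues_self hQ0, Set.univ_inter]
  | succ n ih =>
    have hT : T - n = T - (n + 1) + 1 := by omega
    rw [sellerZ, ih (by omega), hT,
      (convexHull_subset_sellerHedgeValues hadd hsmul hQ0 (by omega)).antisymm
        (sellerHedgeValues_subset_convexHull hadd hsmul hQ0 hQL (by omega))]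

lemma sellerHedgeValues_zero_inter :
    sellerHedgeValues T L Q Y X 0 ∩ ({Y 0} + Q 0)
      = {v : V | ∃ (φ : ℕ → ℝ) (z : ℕ → V),
          (∀ t ≤ T, 0 ≤ φ t) ∧
          (∑ t ∈ range (T + 1), φ t = 1) ∧
          z (T + 1) = 0 ∧
          (∀ t ≤ T, z (t + 1) ∈ L t) ∧
          (∀ t < T, z t - φ t • X t - z (t + 1) ∈ Q t) ∧
          (∀ t ≤ T, z t - (∑ s ∈ Icc t T, φ s) • Y t ∈ Q t) ∧
          z 0 = v} := by
  have hmass (φ : ℕ → ℝ) : ∑ s ∈ Icc 0 T, φ s = ∑ s ∈ range (T + 1), φ s :=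
    sum_Icc_eq_sum_range_of_eq_zero fun s hs => absurd hs s.not_lt_zero
  ext v
  simp only [Set.mem_inter_iff, mem_singleton_add_iff_sub_mem, Set.mem_ofPred_eq]
  constructor
  · rintro ⟨⟨φ, z, h, hφ, rfl⟩, hY⟩
    refine ⟨φ, z, h.nonneg, hφ, h.terminal, fun s => h.mem_L s s.zero_le,
      fun s => h.exercise_mem s s.zero_le, fun s hs => ?_, rfl⟩
    rcases s.eq_zero_or_pos with rfl | hs0
    · rwa [hmass, hφ, one_smul]
    · exact h.cover_mem s hs0 hs
  · rintro ⟨φ, z, hφ0, hφ, hzT, hzL, hex, hcov, rfl⟩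
    refine ⟨⟨φ, z, ⟨hφ0, fun s hs => absurd hs s.not_lt_zero, hzT, fun s _ => hzL s,
      fun s _ => hex s, fun s _ => hcov s⟩, hφ, rfl⟩, ?_⟩
    simpa [hmass, hφ] using hcov 0 T.zero_le

end SellerHedge

theorem stmt12_general {V : Type*} [AddCommGroup V] [Module ℝ V] (T : ℕ)
    (L : ℕ → Submodule ℝ V) (Q : ℕ → Set V)
    (hQ0 : ∀ t, (0 : V) ∈ Q t)
    (hQadd : ∀ t, Q t + Q t = Q t)
    (hQsmul : ∀ t, ∀ c : ℝ, 0 < c → c • Q t = Q t)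
    (hQL : ∀ t, Q (t + 1) ∩ (L t : Set V) ⊆ Q t)
    (Y X : ℕ → V) :
    sellerZ T (fun u => (L u : Set V)) Q Y X T
      = {v : V | ∃ (φ : ℕ → ℝ) (z : ℕ → V),
          (∀ t ≤ T, 0 ≤ φ t) ∧
          (∑ t ∈ Finset.range (T + 1), φ t = 1) ∧
          z (T + 1) = 0 ∧
          (∀ t ≤ T, z (t + 1) ∈ L t) ∧
          (∀ t < T, z t - φ t • X t - z (t + 1) ∈ Q t) ∧
          (∀ t ≤ T, z t - (∑ s ∈ Finset.Icc t T, φ s) • Y t ∈ Q t) ∧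
          z 0 = v} := by
  have hadd : ∀ t, ∀ x ∈ Q t, ∀ y ∈ Q t, x + y ∈ Q t := fun t x hx y hy => by
    rw [← hQadd t]
    exact Set.add_mem_add hx hy
  have hsmul : ∀ t, ∀ c : ℝ, 0 ≤ c → ∀ x ∈ Q t, c • x ∈ Q t := fun t c hc x hx => by
    rcases hc.eq_or_lt with rfl | hc
    · simpa using hQ0 t
    · rw [← hQsmul t c hc]
      exact Set.smul_mem_smul_set hx
  rw [sellerZ_eq_sellerHedgeValues_inter hadd hsmul hQ0 hQL le_rfl, Nat.sub_self,
    sellerHedgeValues_zero_inter]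

/-- 𝒵ᵃ_0 coincides with the set of initial endowments z_0 of pairs
(φ,z) ∈ Λᵃ(Y,X): mixed stopping time φ and predictable z with z_{T+1} = 0,
z_t − φ_t X_t − z_{t+1} ∈ Q_t (t < T) and z_t − φ*_t Y_t ∈ Q_t (t ≤ T). -/
theorem stmt12 {V : Type*} [AddCommGroup V] [Module ℝ V] (T : ℕ)
    (L : ℕ → Submodule ℝ V) (Q : ℕ → Set V)
    (hQconv : ∀ t, Convex ℝ (Q t))
    (hQ0 : ∀ t, (0 : V) ∈ Q t)
    (hQadd : ∀ t, Q t + Q t = Q t)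
    (hQsmul : ∀ t, ∀ c : ℝ, 0 < c → c • Q t = Q t)
    (hQL : ∀ t, Q (t + 1) ∩ (L t : Set V) ⊆ Q t)
    (Y X : ℕ → V) :
    sellerZ T (fun u => (L u : Set V)) Q Y X T
      = {v : V | ∃ (φ : ℕ → ℝ) (z : ℕ → V),
          (∀ t ≤ T, 0 ≤ φ t) ∧
          (∑ t ∈ Finset.range (T + 1), φ t = 1) ∧
          z (T + 1) = 0 ∧
          (∀ t ≤ T, z (t + 1) ∈ L t) ∧
          (∀ t < T, z t - φ t • X t - z (t + 1) ∈ Q t) ∧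
          (∀ t ≤ T, z t - (∑ s ∈ Finset.Icc t T, φ s) • Y t ∈ Q t) ∧
          z 0 = v} :=
  stmt12_general T L Q hQ0 hQadd hQsmul hQL Y X
end

section
/- Fix a mixed stopping time φ. The map z ↦ u defined by u^ψ_t := z^ψ_t − ψ*_t ∑_{s=0}^{t−1} φ_s X_s (for every mixed stopping time ψ and t = 0,…,T+1) is a bijection between seller's superhedging strategies z for the American option with payoff Q_{φ,t} := φ*_t Y_t + ∑_{s=0}^{t−1} φ_s X_s and strategy families u such that (φ,u) superhedges the game option, i.e. u^ψ_t − G_t^{φ,ψ} − u^ψ_{t+1} ∈ K_t for all ψ, t; moreover it preserves the initial endowment (u_0 = z_0) and the non-anticipation property. -/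
/-- ψ is a mixed stopping time on {0,…,T}. -/
def MixedST (T : ℕ) (ψ : ℕ → ℝ) : Prop :=
  (∀ t ≤ T, 0 ≤ ψ t) ∧ ∑ t ∈ Finset.range (T + 1), ψ t = 1

/-- ψ*_t := ∑_{s=t}^T ψ_s (so ψ*_{T+1} = 0). -/
def star (T : ℕ) (ψ : ℕ → ℝ) (t : ℕ) : ℝ := ∑ s ∈ Finset.Icc t T, ψ s

/-- Non-anticipation: the portfolio at time t depends only on ψ_0,…,ψ_{t−1}. -/
def NonAnticipating {V : Type*} (T : ℕ) (u : (ℕ → ℝ) → ℕ → V) : Prop :=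
  ∀ ψ ψ', MixedST T ψ → MixedST T ψ' →
    ∀ t ≤ T + 1, (∀ s < t, ψ s = ψ' s) → u ψ t = u ψ' t

/-!
Subtracting the cash-flow `ψ*_t ∑_{s<t} φ_s X_s` is invertible, and it turns the seller's
increment for the American payoff into the increment for the game payoff: since
`ψ*_t = ψ_t + ψ*_{t+1}`, the term `ψ_t ∑_{s<t} φ_s X_s` of `ψ_t Q_{φ,t}` is absorbed and
`ψ*_{t+1} φ_t X_t` appears. It vanishes at `t = 0` and `t = T + 1`, and `ψ*_t` depends only on
`ψ_0, …, ψ_{t-1}`, so terminal conditions and non-anticipation are preserved both ways.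
-/

section Star

variable {T : ℕ} {ψ : ℕ → ℝ}

lemma star_add_one_self (T : ℕ) (ψ : ℕ → ℝ) : star T ψ (T + 1) = 0 := by
  simp [_root_.star]

lemma star_eq_add_star_succ {t : ℕ} (ht : t ≤ T) :
    star T ψ t = ψ t + star T ψ (t + 1) := by
  unfold _root_.star
  rw [← Finset.Ioc_insert_left ht, Finset.sum_insert (by simp), ← Finset.Icc_add_one_left_eq_Ioc]

lemma star_eq_one_sub_sum_range (hψ : MixedST T ψ) {t : ℕ} (ht : t ≤ T + 1) :
    star T ψ t = 1 - ∑ s ∈ Finset.range t, ψ s := by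
  have h := hψ.2
  rw [Finset.range_eq_Ico, ← Finset.sum_Ico_consecutive _ (Nat.zero_le t) ht] at h
  rw [_root_.star, ← Finset.Ico_add_one_right_eq_Icc, Finset.range_eq_Ico]
  linarith

lemma nonAnticipating_star (T : ℕ) : NonAnticipating T (_root_.star T) := by
  intro ψ ψ' hψ hψ' t ht hagree
  rw [star_eq_one_sub_sum_range hψ ht, star_eq_one_sub_sum_range hψ' ht,
    Finset.sum_congr rfl fun s hs => hagree s (Finset.mem_range.mp hs)]

end Star

section Shift

variable {V : Type*} [AddCommGroup V] [Module ℝ V] {T : ℕ}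

def shiftBy (c : (ℕ → ℝ) → ℕ → ℝ) (S : ℕ → V) (z : (ℕ → ℝ) → ℕ → V) :
    (ℕ → ℝ) → ℕ → V :=
  fun ψ t => z ψ t - c ψ t • S t

lemma shiftBy_injective (c : (ℕ → ℝ) → ℕ → ℝ) (S : ℕ → V) :
    Function.Injective (shiftBy c S) := by
  intro z z' h
  funext ψ t
  simpa [shiftBy] using congrFun (congrFun h ψ) t

lemma shiftBy_shiftBy_neg (c : (ℕ → ℝ) → ℕ → ℝ) (S : ℕ → V) (u : (ℕ → ℝ) → ℕ → V) :
    shiftBy c S (shiftBy (-c) S u) = u := by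
  funext ψ t
  simp [shiftBy]

lemma nonAnticipating_shiftBy_iff {c : (ℕ → ℝ) → ℕ → ℝ} (hc : NonAnticipating T c)
    (S : ℕ → V) {z : (ℕ → ℝ) → ℕ → V} :
    NonAnticipating T (shiftBy c S z) ↔ NonAnticipating T z := by
  refine forall_congr' fun ψ => forall_congr' fun ψ' => forall₂_congr fun hψ hψ' =>
    forall₂_congr fun t ht => imp_congr_right fun hagree => ?_
  simp only [shiftBy, hc ψ ψ' hψ hψ' t ht hagree, sub_left_inj]

end Shift

section Superhedging

variable {V : Type*} [AddCommGroup V] [Module ℝ V] (T : ℕ) (K : ℕ → Set V) (Y X : ℕ → V)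
  (φ : ℕ → ℝ)

def accruedPayoff (t : ℕ) : V := ∑ s ∈ Finset.range t, φ s • X s

def americanSuperhedging : Set ((ℕ → ℝ) → ℕ → V) :=
  {z | (∀ ψ, MixedST T ψ → z ψ (T + 1) = 0 ∧
      ∀ t ≤ T, z ψ t - ψ t • (star T φ t • Y t + accruedPayoff X φ t) - z ψ (t + 1) ∈ K t) ∧
    NonAnticipating T z}

def gameSuperhedging : Set ((ℕ → ℝ) → ℕ → V) :=
  {u | (∀ ψ, MixedST T ψ → u ψ (T + 1) = 0 ∧
      ∀ t ≤ T, u ψ t - ((ψ t * star T φ t) • Y t + (star T ψ (t + 1) * φ t) • X t)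
        - u ψ (t + 1) ∈ K t) ∧
    NonAnticipating T u}

variable {T} {Y X φ}

lemma american_increment_eq_game_increment (z : (ℕ → ℝ) → ℕ → V) (ψ : ℕ → ℝ) {t : ℕ}
    (ht : t ≤ T) :
    z ψ t - ψ t • (star T φ t • Y t + accruedPayoff X φ t) - z ψ (t + 1)
      = shiftBy (_root_.star T) (accruedPayoff X φ) z ψ t
        - ((ψ t * star T φ t) • Y t + (star T ψ (t + 1) * φ t) • X t)
        - shiftBy (_root_.star T) (accruedPayoff X φ) z ψ (t + 1) := by
  rw [shiftBy, shiftBy, accruedPayoff, accruedPayoff, Finset.sum_range_succ,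
    star_eq_add_star_succ (ψ := ψ) ht]
  module

lemma mem_americanSuperhedging_iff (z : (ℕ → ℝ) → ℕ → V) :
    z ∈ americanSuperhedging T K Y X φ ↔
      shiftBy (_root_.star T) (accruedPayoff X φ) z ∈ gameSuperhedging T K Y X φ := by
  simp only [americanSuperhedging, gameSuperhedging, Set.mem_ofPred_eq,
    nonAnticipating_shiftBy_iff (nonAnticipating_star T)]
  refine and_congr_left' (forall₂_congr fun ψ _ => and_congr ?_ (forall₂_congr fun t ht => ?_))
  · simp [shiftBy, star_add_one_self]
  · rw [american_increment_eq_game_increment z ψ ht]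

lemma bijOn_shiftBy_star :
    Set.BijOn (shiftBy (_root_.star T) (accruedPayoff X φ))
      (americanSuperhedging T K Y X φ) (gameSuperhedging T K Y X φ) := by
  refine ⟨fun z hz => (mem_americanSuperhedging_iff K z).mp hz, (shiftBy_injective _ _).injOn,
    fun u hu => ⟨shiftBy (-_root_.star T) (accruedPayoff X φ) u, ?_, shiftBy_shiftBy_neg _ _ u⟩⟩
  rwa [mem_americanSuperhedging_iff, shiftBy_shiftBy_neg]

end Superhedging

theorem stmt14_general {V : Type*} [AddCommGroup V] [Module ℝ V] (T : ℕ)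
    (K : ℕ → Set V) (Y X : ℕ → V) (φ : ℕ → ℝ) :
    Set.BijOn
      (fun (z : (ℕ → ℝ) → ℕ → V) => fun ψ t =>
        z ψ t - star T ψ t • (∑ s ∈ Finset.range t, φ s • X s))
      {z : (ℕ → ℝ) → ℕ → V |
        (∀ ψ, MixedST T ψ → z ψ (T + 1) = 0 ∧
          ∀ t ≤ T,
            z ψ t - ψ t • ((star T φ t) • Y t + ∑ s ∈ Finset.range t, φ s • X s)
                - z ψ (t + 1) ∈ K t) ∧
          NonAnticipating T z}
      {u : (ℕ → ℝ) → ℕ → V |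
        (∀ ψ, MixedST T ψ → u ψ (T + 1) = 0 ∧
          ∀ t ≤ T,
            u ψ t - ((ψ t * star T φ t) • Y t + (star T ψ (t + 1) * φ t) • X t)
                - u ψ (t + 1) ∈ K t) ∧
          NonAnticipating T u}
      ∧
    ∀ (z : (ℕ → ℝ) → ℕ → V) (ψ : ℕ → ℝ),
      (fun ψ t => z ψ t - star T ψ t • (∑ s ∈ Finset.range t, φ s • X s)) ψ 0
        = z ψ 0 :=
  ⟨bijOn_shiftBy_star K, fun z ψ => by simp⟩

/-- Fix a mixed stopping time φ. The map z ↦ u, u^ψ_t := z^ψ_t − ψ*_t ∑_{s<t} φ_s X_s,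
is a bijection between seller's superhedging strategies for the American option with
payoff Q_{φ,t} = φ*_t Y_t + ∑_{s<t} φ_s X_s and families u with (φ,u) superhedging the
game option (u^ψ_t − G_t^{φ,ψ} − u^ψ_{t+1} ∈ K_t), both taken with non-anticipation;
moreover it preserves the initial endowment. -/
theorem stmt14 {V : Type*} [AddCommGroup V] [Module ℝ V] (T : ℕ)
    (K : ℕ → Set V) (Y X : ℕ → V) (φ : ℕ → ℝ) (hφ : MixedST T φ) :
    Set.BijOn
      (fun (z : (ℕ → ℝ) → ℕ → V) => fun ψ t =>
        z ψ t - star T ψ t • (∑ s ∈ Finset.range t, φ s • X s))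
      {z : (ℕ → ℝ) → ℕ → V |
        (∀ ψ, MixedST T ψ → z ψ (T + 1) = 0 ∧
          ∀ t ≤ T,
            z ψ t - ψ t • ((star T φ t) • Y t + ∑ s ∈ Finset.range t, φ s • X s)
                - z ψ (t + 1) ∈ K t) ∧
          NonAnticipating T z}
      {u : (ℕ → ℝ) → ℕ → V |
        (∀ ψ, MixedST T ψ → u ψ (T + 1) = 0 ∧
          ∀ t ≤ T,
            u ψ t - ((ψ t * star T φ t) • Y t + (star T ψ (t + 1) * φ t) • X t)
                - u ψ (t + 1) ∈ K t) ∧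
          NonAnticipating T u}
      ∧
    ∀ (z : (ℕ → ℝ) → ℕ → V) (ψ : ℕ → ℝ),
      (fun ψ t => z ψ t - star T ψ t • (∑ s ∈ Finset.range t, φ s • X s)) ψ 0
        = z ψ 0 :=
  stmt14_general T K Y X φ
end

section
/- Let u = (u_s)_{s=t}^{T+1} satisfy u_{T+1} = 0, u_s ∈ L_{s−1} for all s, u_{t+1} ∈ L_t, and u_s − u_{s+1} ∈ Q_s for s = t+1,…,T. Then u_{t+1} ∈ Q_t. (Backward induction: u_{s+1} ∈ Q_s for all s = t,…,T.) -/
theorem mem_of_sub_mem_of_mem {G : Type*} [AddGroup G] {A : Set G}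
    (hA : ∀ x ∈ A, ∀ y ∈ A, x + y ∈ A) {x y : G} (hxy : x - y ∈ A) (hy : y ∈ A) : x ∈ A := by
  simpa using hA _ hxy _ hy

/-- If u_{T+1} = 0, u_s ∈ L_{s−1}, and u_s − u_{s+1} ∈ Q_s for s = t+1,…,T, then
u_{t+1} ∈ Q_t (backward induction using Q_s + Q_s = Q_s and Q_s ∩ L_{s−1} ⊆ Q_{s−1}). -/
theorem stmt16 {V : Type*} [AddCommGroup V] [Module ℝ V] (T : ℕ)
    (L : ℕ → Submodule ℝ V) (Q : ℕ → Set V)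
    (hQadd : ∀ s, ∀ x ∈ Q s, ∀ y ∈ Q s, x + y ∈ Q s)
    (hQ0T : (0 : V) ∈ Q T)
    (hQL : ∀ s, 1 ≤ s → Q s ∩ (L (s - 1) : Set V) ⊆ Q (s - 1))
    (t : ℕ) (ht : t ≤ T) (u : ℕ → V)
    (huT : u (T + 1) = 0)
    (huL : ∀ s, t + 1 ≤ s → s ≤ T + 1 → u s ∈ (L (s - 1) : Set V))
    (hu : ∀ s, t + 1 ≤ s → s ≤ T → u s - u (s + 1) ∈ Q s) :
    u (t + 1) ∈ Q t := by
  refine Nat.decreasingInduction' (P := fun s => u (s + 1) ∈ Q s)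
    (fun s hsT hts hnext => ?_) ht (by rw [huT]; exact hQ0T)
  have hQ : u (s + 1) ∈ Q (s + 1) :=
    mem_of_sub_mem_of_mem (hQadd _) (hu _ (by omega) (by omega)) hnext
  have hL : u (s + 1) ∈ (L s : Set V) := by simpa using huL (s + 1) (by omega) (by omega)
  simpa using hQL (s + 1) (by omega) ⟨hQ, hL⟩
end
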